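/- The mirror map m is an involution on Dom(m)^𝒢: for every (α, β + ix) ∈ Dom(m)^𝒢 one has m(m(α, β + ix)) = (α, β + ix). -/

import Mathlib

/- Context: `V` is a finite-dimensional real vector space with a nondegenerate symmetric
bilinear form `B` of signature `(3, dim V − 3)`.  We model the complexification `V_ℂ`
by pairs `(a, b) : V × V` representing `a + i·b`. -/

noncomputable section

/-- The ℂ-bilinear extension of `B` to `V × V`, where `(a, b)` represents `a + i·b`. -/
def Bc {V : Type*} [AddCommGroup V] [Module ℝ V] (B : LinearMap.BilinForm ℝ V)
    (y z : V × V) : ℂ :=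
  ⟨B y.1 z.1 - B y.2 z.2, B y.1 z.2 + B y.2 z.1⟩

/-- The inclusion of `V` into its complexification `V × V`. -/
def toC {V : Type*} [AddCommGroup V] (z : V) : V × V := (z, 0)

/-- Complex conjugation on the complexification `V × V`. -/
def conjC {V : Type*} [AddCommGroup V] (y : V × V) : V × V := (y.1, -y.2)

/-- Scalar multiplication by a complex number on the complexification `V × V`. -/
def cSMul {V : Type*} [AddCommGroup V] [Module ℝ V] (s : ℂ) (y : V × V) : V × V :=
  (s.re • y.1 - s.im • y.2, s.im • y.1 + s.re • y.2)

/-- The (symmetric, nondegenerate) form `B` has signature `(3, dim V − 3)`: `V` splits as an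
orthogonal direct sum of a 3-dimensional positive definite subspace and a negative definite
complement. -/
def IsSigThree {V : Type*} [AddCommGroup V] [Module ℝ V] (B : LinearMap.BilinForm ℝ V) : Prop :=
  ∃ P N : Submodule ℝ V, IsCompl P N ∧ Module.finrank ℝ P = 3 ∧
    (∀ x ∈ P, ∀ y ∈ N, B x y = 0) ∧
    (∀ x ∈ P, x ≠ 0 → 0 < B x x) ∧ (∀ y ∈ N, y ≠ 0 → B y y < 0)

/-- The period domain `𝒢`: pairs `(α, β + i·x)` with `α² = 0`, `α·ᾱ > 0`, `α·x = 0`, `x² > 0`.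
A point is `p = (α, (β, x))` where `α : V × V` is a complexified vector and `β, x ∈ V`. -/
def periodDomain {V : Type*} [AddCommGroup V] [Module ℝ V] (B : LinearMap.BilinForm ℝ V) :
    Set ((V × V) × (V × V)) :=
  {p | Bc B p.1 p.1 = 0 ∧ 0 < (Bc B p.1 (conjC p.1)).re ∧
       Bc B p.1 (toC p.2.2) = 0 ∧ 0 < B p.2.2 p.2.2}

/- Mirror-map context: fix `n > 0` and `v, v* ∈ V` spanning a hyperbolic plane `U(n)`:
`v² = (v*)² = 0`, `v·v* = n`. -/

/-- The projection `pr(y) = y − ((y·v*)/n)·v − ((y·v)/n)·v*` on the complexification. -/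
def prC {V : Type*} [AddCommGroup V] [Module ℝ V] (B : LinearMap.BilinForm ℝ V)
    (v vs : V) (n : ℝ) (y : V × V) : V × V :=
  y - cSMul (Bc B y (toC vs) / (n : ℂ)) (toC v) - cSMul (Bc B y (toC v) / (n : ℂ)) (toC vs)

/-- The projection `pr` on real vectors: `pr(z) = z − ((z·v*)/n)·v − ((z·v)/n)·v*`. -/
def prR {V : Type*} [AddCommGroup V] [Module ℝ V] (B : LinearMap.BilinForm ℝ V)
    (v vs : V) (n : ℝ) (z : V) : V :=
  z - (B z vs / n) • v - (B z v / n) • vs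

/-- The domain `Dom(m)^𝒢` of the mirror map: points `(α, β + ix) ∈ 𝒢` with
`Im α · v = 0`, `Re α · v ≠ 0`, `x·v = 0`, `β·v = 0`. -/
def domM {V : Type*} [AddCommGroup V] [Module ℝ V] (B : LinearMap.BilinForm ℝ V)
    (v : V) : Set ((V × V) × (V × V)) :=
  {p | p ∈ periodDomain B ∧ B p.1.2 v = 0 ∧ B p.1.1 v ≠ 0 ∧ B p.2.2 v = 0 ∧ B p.2.1 v = 0}

/-- The mirror map
`m(α, β+ix) = ( [√n·pr(β+ix) − ½((β+ix)²)·v + v*] / (Re α · v), [√n·pr(α) − (α·β)·v] / (Re α · v) )`. -/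
def mir {V : Type*} [AddCommGroup V] [Module ℝ V] (B : LinearMap.BilinForm ℝ V)
    (v vs : V) (n : ℝ) (p : (V × V) × (V × V)) : (V × V) × (V × V) :=
  ((B p.1.1 v)⁻¹ •
      (Real.sqrt n • prC B v vs n p.2 - cSMul (Bc B p.2 p.2 / 2) (toC v) + toC vs),
   (B p.1.1 v)⁻¹ •
      (Real.sqrt n • prC B v vs n p.1 - cSMul (Bc B p.1 (toC p.2.1)) (toC v)))

/-! The projection `pr` is the orthogonal projection onto the complement of the hyperbolic plane
spanned by `v, v*`, so `w = pr w + ((w·v*)/n) v + ((w·v)/n) v*`. Each of the four real components of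
`m(α, β + ix)` has the shape `a⁻¹ (√n pr w − c v + e v*)` with `a = Re α · v`, and the image
has `Re α · v = n / a`. Applying the shape twice gives
`pr w − (a c'/n) v + (a e'/n) v*`, which is `w` once the new constants satisfy `a c' = −w·v*` and
`a e' = w·v`; for the four components these identities come down to `α² = 0`, `α·x = 0` and
`β·v = x·v = Im α·v = 0`. -/

section MirrorMap

variable {V : Type*} [AddCommGroup V] [Module ℝ V] {B : LinearMap.BilinForm ℝ V} {v vs : V} {n : ℝ}

variable (B v vs n) in
structure IsHyperbolicPair : Prop where
  v_v : B v v = 0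
  vs_vs : B vs vs = 0
  v_vs : B v vs = n
  vs_v : B vs v = n
  pos : 0 < n

theorem prR_add (y z : V) : prR B v vs n (y + z) = prR B v vs n y + prR B v vs n z := by
  simp only [prR, map_add, LinearMap.add_apply, add_div, add_smul]
  abel

theorem prR_smul (c : ℝ) (z : V) : prR B v vs n (c • z) = c • prR B v vs n z := by
  simp only [prR, map_smul, LinearMap.smul_apply, smul_eq_mul, mul_div_assoc, smul_sub, mul_smul]

theorem prR_sub (y z : V) : prR B v vs n (y - z) = prR B v vs n y - prR B v vs n z := by
  simp only [prR, map_sub, LinearMap.sub_apply, sub_div, sub_smul]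
  abel

theorem prR_add_smul_add_smul (z : V) :
    prR B v vs n z + (B z vs / n) • v + (B z v / n) • vs = z := by
  simp only [prR]
  abel

theorem IsHyperbolicPair.prR_v (h : IsHyperbolicPair B v vs n) : prR B v vs n v = 0 := by
  simp [prR, h.v_v, h.v_vs, h.pos.ne']

theorem IsHyperbolicPair.prR_vs (h : IsHyperbolicPair B v vs n) : prR B v vs n vs = 0 := by
  simp [prR, h.vs_vs, h.vs_v, h.pos.ne']

theorem IsHyperbolicPair.prR_apply_v (h : IsHyperbolicPair B v vs n) (z : V) :
    B (prR B v vs n z) v = 0 := by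
  simp [prR, h.v_v, h.vs_v, h.pos.ne']

theorem IsHyperbolicPair.prR_apply_vs (h : IsHyperbolicPair B v vs n) (z : V) :
    B (prR B v vs n z) vs = 0 := by
  simp [prR, h.vs_vs, h.v_vs, h.pos.ne']

theorem IsHyperbolicPair.prR_prR (h : IsHyperbolicPair B v vs n) (z : V) :
    prR B v vs n (prR B v vs n z) = prR B v vs n z := by
  rw [prR, h.prR_apply_v, h.prR_apply_vs]
  simp

theorem IsHyperbolicPair.prR_apply_prR (h : IsHyperbolicPair B v vs n) (hB : B.IsSymm) (y z : V) :
    B (prR B v vs n y) (prR B v vs n z) = B y z - (B y vs * B z v + B y v * B z vs) / n := by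
  calc B (prR B v vs n y) (prR B v vs n z) = B (prR B v vs n y) z := by
        nth_rw 2 [prR]
        simp [h.prR_apply_v, h.prR_apply_vs]
    _ = _ := by
        simp only [prR, map_sub, map_smul, LinearMap.sub_apply, LinearMap.smul_apply, smul_eq_mul,
          hB.eq v z, hB.eq vs z]
        ring

variable (B v vs n) in
def mirrorComponent (a : ℝ) (w : V) (c e : ℝ) : V :=
  a⁻¹ • (√n • prR B v vs n w - c • v + e • vs)

theorem IsHyperbolicPair.mirrorComponent_apply_v (h : IsHyperbolicPair B v vs n) (a : ℝ) (w : V)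
    (c e : ℝ) : B (mirrorComponent B v vs n a w c e) v = a⁻¹ * (e * n) := by
  simp [mirrorComponent, h.prR_apply_v, h.v_v, h.vs_v]

theorem IsHyperbolicPair.prR_mirrorComponent (h : IsHyperbolicPair B v vs n) (a : ℝ) (w : V)
    (c e : ℝ) : prR B v vs n (mirrorComponent B v vs n a w c e) = (a⁻¹ * √n) • prR B v vs n w := by
  simp [mirrorComponent, prR_add, prR_sub, prR_smul, h.prR_prR, h.prR_v, h.prR_vs, mul_smul]

theorem IsHyperbolicPair.mirrorComponent_apply_mirrorComponent (h : IsHyperbolicPair B v vs n)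
    (hB : B.IsSymm) (a : ℝ) (w w' : V) (c c' e : ℝ) :
    B (mirrorComponent B v vs n a w c e) (mirrorComponent B v vs n a w' c' 0) =
      a⁻¹ ^ 2 * (n * B (prR B v vs n w) (prR B v vs n w') - e * c' * n) := by
  have hsqrt : √n * √n = n := Real.mul_self_sqrt h.pos.le
  simp only [mirrorComponent, map_add, map_sub, map_smul, LinearMap.add_apply, LinearMap.sub_apply,
    LinearMap.smul_apply, smul_eq_mul, zero_smul, add_zero, h.prR_apply_v, h.prR_apply_vs,
    hB.eq v (prR B v vs n w'), hB.eq vs (prR B v vs n w'), h.v_v, h.vs_v]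
  linear_combination a⁻¹ ^ 2 * B (prR B v vs n w) (prR B v vs n w') * hsqrt

theorem IsHyperbolicPair.mirrorComponent_mirrorComponent (h : IsHyperbolicPair B v vs n)
    {a a' c c' e e' : ℝ} {w : V} (ha : a ≠ 0) (ha' : a' * a = n) (hc : B w vs = -(a * c'))
    (he : B w v = a * e') : mirrorComponent B v vs n a' (mirrorComponent B v vs n a w c e) c' e' = w := by
  have hn : n ≠ 0 := h.pos.ne'
  have ha'_eq : a' = n / a := by rw [← ha', mul_div_cancel_right₀ _ ha]
  conv_rhs => rw [← prR_add_smul_add_smul (B := B) (v := v) (vs := vs) (n := n) w]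
  rw [mirrorComponent, h.prR_mirrorComponent, hc, he, ha'_eq]
  match_scalars <;> field_simp
  exact Real.sq_sqrt h.pos.le

theorem cSMul_toC (s : ℂ) (w : V) : cSMul s (toC w) = (s.re • w, s.im • w) := by
  simp [cSMul, toC]

theorem Bc_toC (y : V × V) (z : V) : Bc B y (toC z) = ⟨B y.1 z, B y.2 z⟩ := by
  simp [Bc, toC]

theorem Bc_self_eq_zero_iff (hB : B.IsSymm) (y : V × V) :
    Bc B y y = 0 ↔ B y.1 y.1 = B y.2 y.2 ∧ B y.1 y.2 = 0 := by
  simp [Bc, Complex.ext_iff, hB.eq y.2 y.1, sub_eq_zero]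

theorem Bc_toC_eq_zero_iff (y : V × V) (z : V) : Bc B y (toC z) = 0 ↔ B y.1 z = 0 ∧ B y.2 z = 0 := by
  simp [Bc_toC, Complex.ext_iff]

theorem prC_eq_prR (y : V × V) : prC B v vs n y = (prR B v vs n y.1, prR B v vs n y.2) := by
  ext <;> simp [prC, prR, Bc_toC, cSMul_toC, Complex.div_ofReal_re, Complex.div_ofReal_im]

theorem mir_mk (hB : B.IsSymm) (a₁ a₂ β x : V) :
    mir B v vs n ((a₁, a₂), (β, x)) =
      ((mirrorComponent B v vs n (B a₁ v) β ((B β β - B x x) / 2) 1,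
        mirrorComponent B v vs n (B a₁ v) x (B β x) 0),
       (mirrorComponent B v vs n (B a₁ v) a₁ (B a₁ β) 0,
        mirrorComponent B v vs n (B a₁ v) a₂ (B a₂ β) 0)) := by
  simp only [mir, prC_eq_prR, cSMul_toC, Bc_toC]
  simp only [Bc, toC, hB.eq x β, mirrorComponent]
  ext <;> simp

theorem IsHyperbolicPair.mir_mir (h : IsHyperbolicPair B v vs n) (hB : B.IsSymm) {a₁ a₂ β x : V} (ha : B a₁ v ≠ 0) (hsq : B a₁ a₁ = B a₂ a₂)
    (h₁₂ : B a₁ a₂ = 0) (h₁x : B a₁ x = 0) (h₂v : B a₂ v = 0) (hxv : B x v = 0)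
    (hβv : B β v = 0) :
    mir B v vs n (mir B v vs n ((a₁, a₂), (β, x))) = ((a₁, a₂), (β, x)) := by
  rw [mir_mk hB, mir_mk hB, h.mirrorComponent_apply_v]
  have hn : n ≠ 0 := h.pos.ne'
  have ha' : (B a₁ v)⁻¹ * (1 * n) * B a₁ v = n := by field_simp
  refine Prod.ext (Prod.ext ?_ ?_) (Prod.ext ?_ ?_) <;>
    refine h.mirrorComponent_mirrorComponent ha ha' ?_ (by simp [h₂v, hxv, hβv])
  all_goals
    simp only [h.mirrorComponent_apply_mirrorComponent hB, h.prR_apply_prR hB, hB.eq β a₁,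
      hB.eq x a₁, h₁x, hsq, h₁₂, h₂v, hxv, hβv]
    field_simp
    ring

end MirrorMap

theorem statement5_general {V : Type*} [NormedAddCommGroup V] [NormedSpace ℝ V]
    (B : LinearMap.BilinForm ℝ V)
    (hsymm : ∀ x y : V, B x y = B y x)
    (n : ℕ) (hn : 0 < n) (v vs : V)
    (hv : B v v = 0) (hvs : B vs vs = 0) (hvvs : B v vs = (n : ℝ))
    (p : (V × V) × (V × V)) (hp : p ∈ domM B v) :
    mir B v vs n (mir B v vs n p) = p := by
  obtain ⟨⟨a₁, a₂⟩, β, x⟩ := p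
  obtain ⟨⟨hαα, -, hαx, -⟩, h₂v, ha, hxv, hβv⟩ := hp
  have hB : B.IsSymm := ⟨hsymm⟩
  have h : IsHyperbolicPair B v vs n := ⟨hv, hvs, hvvs, hsymm vs v ▸ hvvs, Nat.cast_pos.2 hn⟩
  obtain ⟨hsq, h₁₂⟩ := (Bc_self_eq_zero_iff hB _).1 hαα
  exact h.mir_mir hB ha hsq h₁₂ ((Bc_toC_eq_zero_iff _ _).1 hαx).1 h₂v hxv hβv

/-- The mirror map `m` is an involution on `Dom(m)^𝒢`:
`m(m(α, β + ix)) = (α, β + ix)` for every `(α, β + ix) ∈ Dom(m)^𝒢`. -/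
theorem statement5 {V : Type*} [NormedAddCommGroup V] [NormedSpace ℝ V] [FiniteDimensional ℝ V]
    (B : LinearMap.BilinForm ℝ V)
    (hsymm : ∀ x y : V, B x y = B y x)
    (hnd : ∀ x : V, (∀ y : V, B x y = 0) → x = 0)
    (hsig : IsSigThree B)
    (n : ℕ) (hn : 0 < n) (v vs : V)
    (hv : B v v = 0) (hvs : B vs vs = 0) (hvvs : B v vs = (n : ℝ))
    (p : (V × V) × (V × V)) (hp : p ∈ domM B v) :
    mir B v vs n (mir B v vs n p) = p :=
  statement5_general B hsymm n hn v vs hv hvs hvvs p hp
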